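/- arXiv:2407.19115 — 3 statements merged into one kernel-verified Lean document; each statement's English description precedes it below -/
import Mathlib

section
/- Global convergence of DEER (Newton's method) in at most T iterations: if f : ℝ^D → ℝ^D is differentiable, then for any initial guess s^{(0)} ∈ (ℝ^D)^T, the Newton iteration s^{(i+1)} = s^{(i)} - J(s^{(i)})^{-1} r(s^{(i)}) satisfies s^{(i)}_t = s*_t for all t ≤ i, where s* is the true trace; in particular s^{(T)} = s*. -/
open Matrix

noncomputable def Df (D : ℕ) (f : (Fin D → ℝ) → (Fin D → ℝ)) (x : Fin D → ℝ) :
    Matrix (Fin D) (Fin D) ℝ :=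
  LinearMap.toMatrix' (fderiv ℝ f x).toLinearMap

noncomputable def Jmat (D T : ℕ) (f : (Fin D → ℝ) → (Fin D → ℝ))
    (s : Fin T → Fin D → ℝ) : Matrix (Fin T × Fin D) (Fin T × Fin D) ℝ :=
  fun p q =>
    if p.1 = q.1 then (if p.2 = q.2 then (1 : ℝ) else 0)
    else if (p.1 : ℕ) = (q.1 : ℕ) + 1 then -(Df D f (s q.1) p.2 q.2)
    else 0

def resid (D T : ℕ) (f : (Fin D → ℝ) → (Fin D → ℝ)) (s0 : Fin D → ℝ)
    (s : Fin T → Fin D → ℝ) (t : Fin T) : Fin D → ℝ :=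
  s t - f (if _h : (t : ℕ) = 0 then s0
           else s ⟨(t : ℕ) - 1, lt_of_le_of_lt (Nat.sub_le _ _) t.isLt⟩)

/-- The true trace: `s*₀ = s₀` and `s*_{n+1} = f (s*_n)`. -/
def trueTrace (D : ℕ) (f : (Fin D → ℝ) → (Fin D → ℝ)) (s0 : Fin D → ℝ) : ℕ → Fin D → ℝ
  | 0 => s0
  | n + 1 => f (trueTrace D f s0 n)

/-!
Since `J(s)` is unit lower block bidiagonal, the Newton update `s'` of `s` is the linearised
recursion `s'_1 = f s₀`, `s'_t = f (s_{t-1}) + Df(s_{t-1}) (s'_{t-1} - s_{t-1})`.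
If `s_{t-1}` is already exact, then by induction on `t` so is `s'_{t-1}`, the correction term
vanishes and `s'_t = f (s*_{t-1}) = s*_t`: each iteration fixes at least one more entry.
-/

def Fin.truncPred {T : ℕ} (t : Fin T) : Fin T :=
  ⟨(t : ℕ) - 1, lt_of_le_of_lt (Nat.sub_le _ _) t.isLt⟩

@[simp]
lemma Fin.val_truncPred {T : ℕ} (t : Fin T) : (t.truncPred : ℕ) = t - 1 := rfl

lemma Fin.eq_truncPred_iff {T : ℕ} (t u : Fin T) :
    (t : ℕ) = u + 1 ↔ (t : ℕ) ≠ 0 ∧ u = t.truncPred := by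
  rw [Fin.ext_iff, Fin.val_truncPred]
  omega

section Newton

open Function

variable {D T : ℕ} (f : (Fin D → ℝ) → (Fin D → ℝ))

lemma resid_eq (s0 : Fin D → ℝ) (s : Fin T → Fin D → ℝ) (t : Fin T) :
    resid D T f s0 s t = s t - f (if (t : ℕ) = 0 then s0 else s t.truncPred) := by
  simp only [resid, dite_eq_ite, Fin.truncPred]

lemma det_Jmat (s : Fin T → Fin D → ℝ) : (Jmat D T f s).det = 1 := by
  have hbt : (Jmat D T f s)ᵀ.BlockTriangular Prod.fst := by
    intro p q hlt
    have hne : q.1 ≠ p.1 := hlt.ne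
    have hsucc : (q.1 : ℕ) ≠ p.1 + 1 := by have := Fin.lt_def.mp hlt; omega
    simp only [transpose_apply, Jmat, if_neg hne, if_neg hsucc]
  have hdiag : ∀ a, (Jmat D T f s)ᵀ.toSquareBlock Prod.fst a = 1 := by
    intro a
    ext ⟨p, rfl⟩ ⟨q, hq⟩
    simp only [toSquareBlock_def, of_apply, transpose_apply, Jmat, one_apply, Subtype.mk.injEq,
      Prod.ext_iff, hq, true_and, if_true, eq_comm]
  rw [← det_transpose, hbt.det, Finset.prod_eq_one fun a _ => by rw [hdiag, det_one]]

lemma Jmat_mulVec_apply (s : Fin T → Fin D → ℝ) (w : Fin T × Fin D → ℝ) (t : Fin T)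
    (d : Fin D) :
    (Jmat D T f s *ᵥ w) (t, d) = w (t, d) -
      if (t : ℕ) = 0 then 0 else (Df D f (s t.truncPred) *ᵥ fun e => w (t.truncPred, e)) d := by
  have hentry : ∀ u e, Jmat D T f s (t, d) (u, e) = (1 : Matrix _ _ ℝ) (t, d) (u, e) -
      if (t : ℕ) = u + 1 then Df D f (s u) d e else 0 := by
    intro u e
    by_cases htu : t = u
    · simp [Jmat, one_apply, htu]
    · simp [Jmat, one_apply, htu, Prod.ext_iff, neg_ite]
  simp only [mulVec, dotProduct, Fintype.sum_prod_type, hentry, sub_mul, Finset.sum_sub_distrib]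
  simp [one_apply, ite_and, Fin.eq_truncPred_iff]

lemma newton_step_apply {s0 : Fin D → ℝ} {s s' : Fin T → Fin D → ℝ}
    (hstep : uncurry s' = uncurry s - (Jmat D T f s)⁻¹ *ᵥ uncurry (resid D T f s0 s))
    (t : Fin T) :
    s' t = f (if (t : ℕ) = 0 then s0 else s t.truncPred) +
      if (t : ℕ) = 0 then 0 else Df D f (s t.truncPred) *ᵥ (s' t.truncPred - s t.truncPred) := by
  have hlin : Jmat D T f s *ᵥ (uncurry s - uncurry s') = uncurry (resid D T f s0 s) := by
    rw [hstep, sub_sub_cancel, mulVec_mulVec, mul_nonsing_inv _ (by simp [det_Jmat]), one_mulVec]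
  funext d
  have hrow := congrFun hlin (t, d)
  simp only [Jmat_mulVec_apply, uncurry_apply_pair, resid_eq, Pi.sub_apply] at hrow
  split_ifs at hrow ⊢
  · simp only [Pi.add_apply, Pi.zero_apply]
    linarith
  · have hdiff : (fun e => s t.truncPred e - s' t.truncPred e) =
        -(s' t.truncPred - s t.truncPred) := by
      ext; simp
    rw [hdiff, mulVec_neg] at hrow
    simp only [Pi.add_apply, Pi.neg_apply] at hrow ⊢
    linarith

lemma newton_step_exact_prefix {s0 : Fin D → ℝ} {s s' : Fin T → Fin D → ℝ}
    (hstep : uncurry s' = uncurry s - (Jmat D T f s)⁻¹ *ᵥ uncurry (resid D T f s0 s)) {i : ℕ}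
    (hs : ∀ t : Fin T, (t : ℕ) < i → s t = trueTrace D f s0 (t + 1)) (t : Fin T)
    (ht : (t : ℕ) < i + 1) : s' t = trueTrace D f s0 (t + 1) := by
  induction hn : (t : ℕ) generalizing t with
  | zero => rw [newton_step_apply f hstep t, if_pos hn, if_pos hn, add_zero]; rfl
  | succ n ih =>
    have hpred : (t.truncPred : ℕ) = n := by simp [hn]
    have hs_pred := hs t.truncPred (by omega)
    have hs'_pred := ih t.truncPred (by omega) hpred
    rw [newton_step_apply f hstep t, if_neg (by omega), if_neg (by omega), hs_pred, hs'_pred,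
      hpred, sub_self, mulVec_zero, add_zero]
    rfl

end Newton

theorem deer_global_convergence_general (D T : ℕ) (f : (Fin D → ℝ) → (Fin D → ℝ))
    (s0 : Fin D → ℝ)
    (seq : ℕ → Fin T → Fin D → ℝ)
    (hiter : ∀ i : ℕ,
      (fun p : Fin T × Fin D => seq (i + 1) p.1 p.2) =
        (fun p : Fin T × Fin D => seq i p.1 p.2) -
          (Jmat D T f (seq i))⁻¹ *ᵥ (fun p : Fin T × Fin D => resid D T f s0 (seq i) p.1 p.2)) :
    (∀ i : ℕ, ∀ t : Fin T, (t : ℕ) < i → seq i t = trueTrace D f s0 ((t : ℕ) + 1)) ∧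
    (∀ t : Fin T, seq T t = trueTrace D f s0 ((t : ℕ) + 1)) := by
  have hprefix : ∀ i, ∀ t : Fin T, (t : ℕ) < i → seq i t = trueTrace D f s0 (t + 1) := by
    intro i
    induction i with
    | zero => intro t ht; omega
    | succ i ih => exact newton_step_exact_prefix f (hiter i) ih
  exact ⟨hprefix, fun t => hprefix T t t.isLt⟩

/-- global convergence of DEER (Newton's method) in at most `T` iterations:
after `i` Newton iterations the first `i` entries of the trace are exact; in particular
`s^{(T)} = s*`. -/
theorem deer_global_convergence (D T : ℕ) (f : (Fin D → ℝ) → (Fin D → ℝ))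
    (hf : Differentiable ℝ f) (s0 : Fin D → ℝ)
    (seq : ℕ → Fin T → Fin D → ℝ)
    (hiter : ∀ i : ℕ,
      (fun p : Fin T × Fin D => seq (i + 1) p.1 p.2) =
        (fun p : Fin T × Fin D => seq i p.1 p.2) -
          (Jmat D T f (seq i))⁻¹ *ᵥ (fun p : Fin T × Fin D => resid D T f s0 (seq i) p.1 p.2)) :
    (∀ i : ℕ, ∀ t : Fin T, (t : ℕ) < i → seq i t = trueTrace D f s0 ((t : ℕ) + 1)) ∧
    (∀ t : Fin T, seq T t = trueTrace D f s0 ((t : ℕ) + 1)) :=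
  deer_global_convergence_general D T f s0 seq hiter
end

section
/- Finite-step convergence of quasi-Newton DEER with arbitrary matrices: let (M_t^{(i)})_{t=2..T} be any family of D×D matrices (possibly changing each iteration), and define the update Δ₁^{(i+1)} = -r₁(s^{(i)}), Δ_t^{(i+1)} = M_t^{(i)} Δ_{t-1}^{(i+1)} - r_t(s^{(i)}), with s^{(i+1)} = s^{(i)} + Δ^{(i+1)}. Then s^{(i)}_t = s*_t for all t ≤ i, so the iteration converges to the true trace s* in at most T iterations. -/
/-!
Call a trace exact up to `n` if its first `n` entries agree with the true trace. If `s` is exact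
up to `n`, the residuals of `s` vanish before `n`, so the linear recurrence defining the update `Δ`
is driven by zero there and `Δ` vanishes before `n` whatever the matrices are. At `n` the
recurrence then gives `Δ_n = -r_n(s) = s*_n - s_n`, because `s_{n-1}` is already exact. Hence
`s + Δ` is exact up to `n + 1`, and induction on the iteration count gives the theorem.
-/

open Matrix

section QuasiDeer

variable {D T : ℕ} {f : (Fin D → ℝ) → (Fin D → ℝ)} {s0 : Fin D → ℝ}

-- Entry `t : Fin T` of a trace approximates `s*_{t+1}`: the indices are shifted by one.
def IsExactUpTo (f : (Fin D → ℝ) → (Fin D → ℝ)) (s0 : Fin D → ℝ) (s : Fin T → Fin D → ℝ)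
    (n : ℕ) : Prop :=
  ∀ t : Fin T, (t : ℕ) < n → s t = trueTrace D f s0 ((t : ℕ) + 1)

def IsQuasiDeerUpdate (f : (Fin D → ℝ) → (Fin D → ℝ)) (s0 : Fin D → ℝ)
    (A : Fin T → Matrix (Fin D) (Fin D) ℝ) (s δ : Fin T → Fin D → ℝ) : Prop :=
  (∀ t : Fin T, (t : ℕ) = 0 → δ t = -(resid D T f s0 s t)) ∧
  (∀ t : Fin T, (t : ℕ) ≠ 0 →
    δ t = A t *ᵥ δ ⟨(t : ℕ) - 1, lt_of_le_of_lt (Nat.sub_le _ _) t.isLt⟩ - resid D T f s0 s t)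

theorem IsExactUpTo.mono {s : Fin T → Fin D → ℝ} {m n : ℕ} (hs : IsExactUpTo f s0 s n)
    (hmn : m ≤ n) : IsExactUpTo f s0 s m :=
  fun t ht => hs t (lt_of_lt_of_le ht hmn)

theorem resid_eq_sub_trueTrace {s : Fin T → Fin D → ℝ} {t : Fin T}
    (hs : IsExactUpTo f s0 s t) :
    resid D T f s0 s t = s t - trueTrace D f s0 ((t : ℕ) + 1) := by
  rw [resid]
  split_ifs with ht
  · rw [ht]; rfl
  · rw [hs ⟨(t : ℕ) - 1, _⟩ (by simp only; omega)]
    change _ - trueTrace D f s0 ((t : ℕ) - 1 + 1 + 1) = _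
    rw [Nat.sub_add_cancel (Nat.pos_of_ne_zero ht)]

theorem resid_eq_zero {s : Fin T → Fin D → ℝ} {t : Fin T}
    (hs : IsExactUpTo f s0 s ((t : ℕ) + 1)) : resid D T f s0 s t = 0 := by
  rw [resid_eq_sub_trueTrace (hs.mono t.val.le_succ), hs t t.val.lt_succ_self, sub_self]

namespace IsQuasiDeerUpdate

variable {A : Fin T → Matrix (Fin D) (Fin D) ℝ} {s δ : Fin T → Fin D → ℝ}

theorem eq_zero_of_lt (hu : IsQuasiDeerUpdate f s0 A s δ) {n : ℕ}
    (hs : IsExactUpTo f s0 s n) {t : Fin T} (ht : (t : ℕ) < n) : δ t = 0 := by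
  induction hk : (t : ℕ) generalizing t with
  | zero => rw [hu.1 t hk, resid_eq_zero (hs.mono (by omega)), neg_zero]
  | succ k ih =>
    rw [hu.2 t (by omega), resid_eq_zero (hs.mono (by omega)), ih (by simp only; omega)
      (by simp only; omega), mulVec_zero, sub_zero]

theorem isExactUpTo_add (hu : IsQuasiDeerUpdate f s0 A s δ) {n : ℕ}
    (hs : IsExactUpTo f s0 s n) : IsExactUpTo f s0 (s + δ) (n + 1) := by
  intro t ht
  rcases Nat.lt_succ_iff_lt_or_eq.mp ht with ht | rfl
  · rw [Pi.add_apply, hu.eq_zero_of_lt hs ht, add_zero, hs t ht]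
  · have hδ : δ t = -(resid D T f s0 s t) := by
      by_cases h0 : (t : ℕ) = 0
      · exact hu.1 t h0
      · rw [hu.2 t h0, hu.eq_zero_of_lt hs (by simp only; omega), mulVec_zero, zero_sub]
    rw [Pi.add_apply, hδ, resid_eq_sub_trueTrace hs]
    abel

end IsQuasiDeerUpdate

end QuasiDeer

/-- quasi-Newton DEER with arbitrary matrices `M_t^{(i)}` replacing the
Jacobians still converges to the true trace in at most `T` iterations: after `i`
iterations the first `i` entries are exact. -/
theorem quasi_deer_global_convergence (D T : ℕ) (f : (Fin D → ℝ) → (Fin D → ℝ))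
    (s0 : Fin D → ℝ)
    (M : ℕ → Fin T → Matrix (Fin D) (Fin D) ℝ)
    (seq : ℕ → Fin T → Fin D → ℝ)
    (Δ : ℕ → Fin T → Fin D → ℝ)
    (hΔ0 : ∀ i : ℕ, ∀ t : Fin T, (t : ℕ) = 0 →
      Δ (i + 1) t = -(resid D T f s0 (seq i) t))
    (hΔ : ∀ i : ℕ, ∀ t : Fin T, (t : ℕ) ≠ 0 →
      Δ (i + 1) t =
        (M i t) *ᵥ (Δ (i + 1) ⟨(t : ℕ) - 1, lt_of_le_of_lt (Nat.sub_le _ _) t.isLt⟩)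
          - resid D T f s0 (seq i) t)
    (hstep : ∀ i : ℕ, seq (i + 1) = seq i + Δ (i + 1)) :
    (∀ i : ℕ, ∀ t : Fin T, (t : ℕ) < i → seq i t = trueTrace D f s0 ((t : ℕ) + 1)) ∧
    (∀ t : Fin T, seq T t = trueTrace D f s0 ((t : ℕ) + 1)) := by
  have hexact : ∀ i : ℕ, IsExactUpTo f s0 (seq i) i := by
    intro i
    induction i with
    | zero => intro t ht; omega
    | succ i ih => rw [hstep i]; exact IsQuasiDeerUpdate.isExactUpTo_add ⟨hΔ0 i, hΔ i⟩ ih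
  exact ⟨hexact, fun t => hexact T t t.isLt⟩
end

section
/- Monotonicity of the damped step size: for J ∈ ℝ^{m×n}, r ∈ ℝ^m, the norm ‖Δ(λ)‖ of the Levenberg-Marquardt minimizer Δ(λ) = -(JᵀJ + λI)^{-1} Jᵀ r is nonincreasing in λ on (0, ∞). -/
/-!
Up to the constant `‖r‖²` and a factor `2`, the Levenberg–Marquardt objective is
`q v + λ ‖v‖²` with `q v = 2 ⟪Jᵀ r, v⟫ + ⟪v, JᵀJ v⟫`, and `Δ(λ)` is its minimizer.
Testing each of `Δ(λ₁)`, `Δ(λ₂)` against the other in its own objective and adding the two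
inequalities cancels `q` and leaves `(λ₂ - λ₁) (‖Δ(λ₂)‖² - ‖Δ(λ₁)‖²) ≤ 0`.
-/

open Matrix

/-- Euclidean norm of a vector in `ℝ^n`. -/
noncomputable def euclNorm (n : ℕ) (v : Fin n → ℝ) : ℝ :=
  Real.sqrt (∑ i : Fin n, (v i) ^ 2)

theorem le_of_isMinOn_add_mul_of_isMinOn_add_mul {α : Type*} {q g : α → ℝ} {lam₁ lam₂ : ℝ}
    {x₁ x₂ : α} (hlt : lam₁ < lam₂)
    (h₁ : IsMinOn (fun v ↦ q v + lam₁ * g v) Set.univ x₁)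
    (h₂ : IsMinOn (fun v ↦ q v + lam₂ * g v) Set.univ x₂) :
    g x₂ ≤ g x₁ := by
  have h₁₂ : q x₁ + lam₁ * g x₁ ≤ q x₂ + lam₁ * g x₂ := h₁ (Set.mem_univ x₂)
  have h₂₁ : q x₂ + lam₂ * g x₂ ≤ q x₁ + lam₂ * g x₁ := h₂ (Set.mem_univ x₁)
  have : (lam₂ - lam₁) * g x₂ ≤ (lam₂ - lam₁) * g x₁ := by linarith
  exact le_of_mul_le_mul_left this (sub_pos.mpr hlt)

namespace Matrix

variable {ι : Type*}

theorem PosSemidef.posDef_add_smul_one [DecidableEq ι] {A : Matrix ι ι ℝ} (hA : A.PosSemidef)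
    {lam : ℝ} (hlam : 0 < lam) : (A + lam • (1 : Matrix ι ι ℝ)).PosDef :=
  PosDef.posSemidef_add hA (PosDef.one.smul hlam)

variable [Fintype ι]

theorem IsSymm.dotProduct_mulVec_comm {B : Matrix ι ι ℝ} (hB : B.IsSymm) (x y : ι → ℝ) :
    x ⬝ᵥ B *ᵥ y = y ⬝ᵥ B *ᵥ x := by
  rw [dotProduct_mulVec, ← mulVec_transpose, hB.eq, dotProduct_comm]

theorem IsSymm.quadratic_sub_quadratic_of_mulVec_eq_neg {B : Matrix ι ι ℝ} (hB : B.IsSymm)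
    {b x : ι → ℝ} (hx : B *ᵥ x = -b) (v : ι → ℝ) :
    (2 * (b ⬝ᵥ v) + v ⬝ᵥ B *ᵥ v) - (2 * (b ⬝ᵥ x) + x ⬝ᵥ B *ᵥ x) =
      (v - x) ⬝ᵥ B *ᵥ (v - x) := by
  obtain rfl : b = -(B *ᵥ x) := by rw [hx, neg_neg]
  have hvx := hB.dotProduct_mulVec_comm v x
  simp only [mulVec_sub, dotProduct_sub, sub_dotProduct, neg_dotProduct,
    dotProduct_comm (B *ᵥ x)]
  linarith

theorem PosSemidef.isMinOn_quadratic_of_mulVec_eq_neg {B : Matrix ι ι ℝ} (hB : B.PosSemidef)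
    {b x : ι → ℝ} (hx : B *ᵥ x = -b) :
    IsMinOn (fun v ↦ 2 * (b ⬝ᵥ v) + v ⬝ᵥ B *ᵥ v) Set.univ x := isMinOn_univ_iff.mpr fun v ↦ by
  have hsymm : B.IsSymm := isHermitian_iff_isSymm.mp hB.isHermitian
  have := hsymm.quadratic_sub_quadratic_of_mulVec_eq_neg hx v
  have := hB.dotProduct_mulVec_nonneg (v - x)
  simp only [star_trivial] at this
  linarith

variable [DecidableEq ι]

/-- For `A = JᵀJ` and `b = Jᵀ r` this is the Levenberg–Marquardt step `Δ(λ)`. -/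
noncomputable def dampedStep (A : Matrix ι ι ℝ) (b : ι → ℝ) (lam : ℝ) : ι → ℝ :=
  -((A + lam • (1 : Matrix ι ι ℝ))⁻¹ *ᵥ b)

theorem PosSemidef.isMinOn_dampedStep {A : Matrix ι ι ℝ} (hA : A.PosSemidef) (b : ι → ℝ)
    {lam : ℝ} (hlam : 0 < lam) :
    IsMinOn (fun v ↦ (2 * (b ⬝ᵥ v) + v ⬝ᵥ A *ᵥ v) + lam * (v ⬝ᵥ v)) Set.univ
      (dampedStep A b lam) := by
  have hB := hA.posDef_add_smul_one hlam
  have hstep : (A + lam • (1 : Matrix ι ι ℝ)) *ᵥ dampedStep A b lam = -b := by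
    rw [dampedStep, mulVec_neg, mulVec_mulVec,
      mul_nonsing_inv _ ((isUnit_iff_isUnit_det _).mp hB.isUnit), one_mulVec]
  convert hB.posSemidef.isMinOn_quadratic_of_mulVec_eq_neg hstep using 2 with v
  simp only [add_mulVec, smul_mulVec, one_mulVec, dotProduct_add, dotProduct_smul, smul_eq_mul]
  ring

theorem PosSemidef.dotProduct_self_dampedStep_antitoneOn {A : Matrix ι ι ℝ} (hA : A.PosSemidef)
    (b : ι → ℝ) :
    AntitoneOn (fun lam ↦ dampedStep A b lam ⬝ᵥ dampedStep A b lam) (Set.Ioi 0) := by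
  intro lam₁ h₁ lam₂ _ hle
  rcases hle.eq_or_lt with rfl | hlt
  · exact le_rfl
  exact le_of_isMinOn_add_mul_of_isMinOn_add_mul hlt (hA.isMinOn_dampedStep b h₁)
    (hA.isMinOn_dampedStep b (lt_trans h₁ hlt))

end Matrix

theorem euclNorm_eq_sqrt_dotProduct_self (n : ℕ) (v : Fin n → ℝ) :
    euclNorm n v = Real.sqrt (v ⬝ᵥ v) := by
  simp only [euclNorm, dotProduct, sq]

/-- the Euclidean norm of the Levenberg-Marquardt step
`Δ(λ) = -(JᵀJ + λI)⁻¹ Jᵀ r` is nonincreasing in `λ` on `(0, ∞)`. -/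
theorem lm_step_norm_antitone (m n : ℕ) (J : Matrix (Fin m) (Fin n) ℝ) (r : Fin m → ℝ) :
    ∀ lam₁ lam₂ : ℝ, 0 < lam₁ → lam₁ ≤ lam₂ →
      euclNorm n (-((Jᵀ * J + lam₂ • (1 : Matrix (Fin n) (Fin n) ℝ))⁻¹ *ᵥ (Jᵀ *ᵥ r))) ≤
        euclNorm n (-((Jᵀ * J + lam₁ • (1 : Matrix (Fin n) (Fin n) ℝ))⁻¹ *ᵥ (Jᵀ *ᵥ r))) := by
  intro lam₁ lam₂ h₁ hle
  have hJ : (Jᵀ * J).PosSemidef := by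
    simpa only [conjTranspose_eq_transpose_of_trivial] using posSemidef_conjTranspose_mul_self J
  simp only [euclNorm_eq_sqrt_dotProduct_self]
  exact Real.sqrt_le_sqrt <| hJ.dotProduct_self_dampedStep_antitoneOn (Jᵀ *ᵥ r) h₁
    (Set.mem_Ioi.mpr (h₁.trans_le hle)) hle
end
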